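/- arXiv:1001.4051 — 7 statements merged into one kernel-verified Lean document; each statement's English description precedes it below -/
import Mathlib

section
/- Let A, B ∈ ℝ^{n×m} be matrices with all entries finite. If λ ∈ ℝ is an eigenvalue of the two-sided eigenproblem A ⊗ x = λ + (B ⊗ x) (i.e. there exists x with at least one finite entry satisfying it), then max_i min_j (A_{ij} − B_{ij}) ≤ λ ≤ min_i max_j (A_{ij} − B_{ij}). -/
open Finset

/-- Max-plus matrix-vector product over `WithBot ℝ`. -/
def mpMul {n m : ℕ} (A : Fin n → Fin m → WithBot ℝ) (x : Fin m → WithBot ℝ) :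
    Fin n → WithBot ℝ :=
  fun i => univ.sup fun j => A i j + x j

/-
Row `i` of the eigen-equation says that the max-plus sums `max_j (A i j + x j)` and
`max_j ((λ + B i j) + x j)` coincide. Whenever one such sum is at most another, take an index `j`
attaining the larger one: `x j` is finite there, and cancelling it gives the coefficientwise
inequality at `j`. The two directions yield an index with `A i j - B i j ≤ λ` and one with
`λ ≤ A i j - B i j`.
-/

theorem WithBot.coe_add_finset_sup {α ι : Type*} [LinearOrder α] [Add α] [AddLeftMono α]
    (s : Finset ι) (c : α) (f : ι → WithBot α) :
    (c : WithBot α) + s.sup f = s.sup fun j => c + f j :=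
  Finset.apply_sup_eq_sup_comp (g := fun y : WithBot α => (c : WithBot α) + y)
    (fun _ _ => add_max _ _ _) (WithBot.add_bot _)

theorem exists_le_of_sup_coe_add_le {ι : Type*} {s : Finset ι} (a b : ι → ℝ)
    {x : ι → WithBot ℝ} (hx : ∃ j ∈ s, x j ≠ ⊥)
    (h : (s.sup fun j => (a j : WithBot ℝ) + x j) ≤ s.sup fun j => (b j : WithBot ℝ) + x j) :
    ∃ j ∈ s, a j ≤ b j := by
  obtain ⟨j₀, hj₀s, hj₀⟩ := hx
  obtain ⟨j, hjs, hj⟩ := s.exists_mem_eq_sup ⟨j₀, hj₀s⟩ fun j => (b j : WithBot ℝ) + x j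
  have hxj : x j ≠ ⊥ := by
    intro hbot
    have hle₀ := hj ▸ s.le_sup (f := fun j => (b j : WithBot ℝ) + x j) hj₀s
    simp [hbot, WithBot.add_eq_bot, hj₀] at hle₀
  obtain ⟨t, ht⟩ := WithBot.ne_bot_iff_exists.mp hxj
  refine ⟨j, hjs, ?_⟩
  have hle : ((a j + t : ℝ) : WithBot ℝ) ≤ ((b j + t : ℝ) : WithBot ℝ) := by
    push_cast
    rw [ht, ← hj]
    exact (s.le_sup (f := fun j => (a j : WithBot ℝ) + x j) hjs).trans h
  exact le_of_add_le_add_right (WithBot.coe_le_coe.mp hle)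

theorem coe_add_mpMul {n m : ℕ} (c : ℝ) (B : Fin n → Fin m → ℝ) (x : Fin m → WithBot ℝ)
    (i : Fin n) :
    (c : WithBot ℝ) + mpMul (fun i j => (B i j : WithBot ℝ)) x i =
      mpMul (fun i j => ((c + B i j : ℝ) : WithBot ℝ)) x i := by
  simp only [mpMul, WithBot.coe_add_finset_sup, WithBot.coe_add, add_assoc]

/-- Spectral bounds for the two-sided eigenproblem with finite matrices:
if `A ⊗ x = λ + (B ⊗ x)` has a nontrivial solution, then
`max_i min_j (A_{ij} - B_{ij}) ≤ λ ≤ min_i max_j (A_{ij} - B_{ij})`. -/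
theorem twosided_spectrum_bounds {n m : ℕ} (hn : 0 < n) (hm : 0 < m)
    (A B : Fin n → Fin m → ℝ) (lam : ℝ) (x : Fin m → WithBot ℝ)
    (hx : ∃ j, x j ≠ ⊥)
    (heig : mpMul (fun i j => (A i j : WithBot ℝ)) x =
      fun i => (lam : WithBot ℝ) + mpMul (fun i j => (B i j : WithBot ℝ)) x i) :
    (univ.sup' (univ_nonempty_iff.mpr (Fin.pos_iff_nonempty.mp hn))
        fun i => univ.inf' (univ_nonempty_iff.mpr (Fin.pos_iff_nonempty.mp hm))
          fun j => A i j - B i j) ≤ lam ∧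
    lam ≤ (univ.inf' (univ_nonempty_iff.mpr (Fin.pos_iff_nonempty.mp hn))
        fun i => univ.sup' (univ_nonempty_iff.mpr (Fin.pos_iff_nonempty.mp hm))
          fun j => A i j - B i j) := by
  have hx' : ∃ j ∈ univ, x j ≠ ⊥ := by simpa using hx
  have hrow (i : Fin n) : mpMul (fun i j => (A i j : WithBot ℝ)) x i =
      mpMul (fun i j => ((lam + B i j : ℝ) : WithBot ℝ)) x i := by
    rw [congrFun heig i, coe_add_mpMul]
  constructor
  · refine sup'_le _ _ fun i _ => ?_
    obtain ⟨j, hj, hle⟩ := exists_le_of_sup_coe_add_le (A i) (lam + B i ·) hx' (hrow i).le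
    exact (inf'_le _ hj).trans (by linarith)
  · refine le_inf' _ _ fun i _ => ?_
    obtain ⟨j, hj, hle⟩ := exists_le_of_sup_coe_add_le (lam + B i ·) (A i) hx' (hrow i).ge
    exact (show lam ≤ A i j - B i j by linarith).trans (le_sup' (fun j => A i j - B i j) hj)
end

section
/- Let A ∈ (ℝ ∪ {-∞})^{n×m} and b ∈ ℝ^n. The system A ⊗ x = b is solvable if and only if the union over columns i = 1, …, m of the sets T(b, A_{·i}) equals {1, …, n}, where T(y,z) = argmin { y_k − z_k : k with y_k and z_k both finite }. -/
/-!
If `A ⊗ x = b`, the maximum in row `k` is attained at some column `j`; then `x_j` is a real shift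
`t` with `A_{·j} + t ≤ b` and equality at `k`, which says exactly that `k ∈ T(b, A_{·j})`.
Conversely, the principal solution `x̄_j = min_l (b_l - A_{lj})` always satisfies `A ⊗ x̄ ≤ b`,
and `k ∈ T(b, A_{·i})` means that this minimum is attained at `k`, so row `k` holds with equality.
-/

open Finset

/-- Membership `k ∈ T(b, z)` for finite `b`: `z k` is finite and `k` minimizes
`b_k - z_k` over indices where `z` is finite. -/
def memT {n : ℕ} (b : Fin n → ℝ) (z : Fin n → WithBot ℝ) (k : Fin n) : Prop :=
  ∃ r : ℝ, z k = (r : WithBot ℝ) ∧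
    ∀ l : Fin n, ∀ s : ℝ, z l = (s : WithBot ℝ) → b k - r ≤ b l - s

theorem Finset.sup_eq_iff_of_ne_bot {α ι : Type*} [LinearOrder α] [OrderBot α] {s : Finset ι}
    {f : ι → α} {a : α} (ha : a ≠ ⊥) :
    s.sup f = a ↔ (∀ j ∈ s, f j ≤ a) ∧ ∃ j ∈ s, f j = a := by
  constructor
  · rintro rfl
    obtain hs | hs := s.eq_empty_or_nonempty
    · simp [hs] at ha
    · exact ⟨fun j hj => le_sup hj, (exists_mem_eq_sup s hs f).imp fun _ ⟨hj, h⟩ => ⟨hj, h.symm⟩⟩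
  · rintro ⟨hle, j, hj, rfl⟩
    exact le_antisymm (Finset.sup_le hle) (le_sup hj)

namespace WithBot

variable {α : Type*} [AddCommGroup α] {a : WithBot α} {u v u' v' : α}

theorem add_coe_eq_coe_iff (h : v - u = v' - u') : a + u = v ↔ a + u' = v' := by
  cases a with
  | bot => simp
  | coe a => simp only [← coe_add, coe_inj, ← eq_sub_iff_add_eq, h]

theorem add_coe_le_coe_iff [PartialOrder α] [IsOrderedAddMonoid α] (h : v - u = v' - u') :
    a + u ≤ v ↔ a + u' ≤ v' := by
  cases a with
  | bot => simp
  | coe a => simp only [← coe_add, coe_le_coe, ← le_sub_iff_add_le, h]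

end WithBot

open WithBot

theorem memT_iff_exists_shift {n : ℕ} {b : Fin n → ℝ} {z : Fin n → WithBot ℝ} {k : Fin n} :
    memT b z k ↔ ∃ t : ℝ, z k + t = b k ∧ ∀ l, z l + t ≤ b l := by
  constructor
  · rintro ⟨r, hr, hmin⟩
    refine ⟨b k - r, by rw [hr, ← WithBot.coe_add, add_sub_cancel], fun l => ?_⟩
    cases hl : z l with
    | bot => simp
    | coe s =>
      rw [← WithBot.coe_add, coe_le_coe]
      linarith [hmin l s hl]
  · rintro ⟨t, hk, hle⟩
    obtain ⟨r, t', hr, ht, hrt⟩ := add_eq_coe.mp hk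
    obtain rfl : t' = t := coe_eq_coe.mp ht
    refine ⟨r, hr.symm, fun l s hs => ?_⟩
    have hl := hle l
    rw [hs, ← WithBot.coe_add, coe_le_coe] at hl
    linarith

theorem mpMul_eq_coe_iff {n m : ℕ} {A : Fin n → Fin m → WithBot ℝ} {x : Fin m → WithBot ℝ}
    {b : Fin n → ℝ} :
    mpMul A x = (fun k => (b k : WithBot ℝ)) ↔
      (∀ k j, A k j + x j ≤ b k) ∧ ∀ k, ∃ j, A k j + x j = b k := by
  rw [funext_iff, ← forall_and]
  refine forall_congr' fun k => ?_
  rw [mpMul, Finset.sup_eq_iff_of_ne_bot coe_ne_bot]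
  simp

/-- The principal solution `x̄ⱼ = minₗ (bₗ - Aₗⱼ) = -maxₗ (Aₗⱼ - bₗ)`. On a column without finite
entries it ought to be `+∞`; there any value works, and this formula gives `⊥`. -/
def principalSol {n m : ℕ} (A : Fin n → Fin m → WithBot ℝ) (b : Fin n → ℝ) (j : Fin m) :
    WithBot ℝ :=
  (univ.sup fun l => A l j + ((-b l : ℝ) : WithBot ℝ)).map Neg.neg

section principalSol

variable {n m : ℕ} {A : Fin n → Fin m → WithBot ℝ} {b : Fin n → ℝ}

theorem add_principalSol_le (k : Fin n) (j : Fin m) : A k j + principalSol A b j ≤ b k := by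
  unfold principalSol
  cases hc : univ.sup fun l => A l j + ((-b l : ℝ) : WithBot ℝ) with
  | bot => simp
  | coe c =>
    rw [map_coe]
    exact (add_coe_le_coe_iff (by ring)).mp ((le_sup (mem_univ k)).trans_eq hc)

theorem principalSol_eq_of_shift {k : Fin n} {j : Fin m} {t : ℝ} (hk : A k j + t = b k)
    (hle : ∀ l, A l j + t ≤ b l) : principalSol A b j = t := by
  have hsup : (univ.sup fun l => A l j + ((-b l : ℝ) : WithBot ℝ)) = ((-t : ℝ) : WithBot ℝ) := by
    refine (Finset.sup_eq_iff_of_ne_bot coe_ne_bot).mpr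
      ⟨fun l _ => (add_coe_le_coe_iff (by ring)).mp (hle l), k, mem_univ k,
        (add_coe_eq_coe_iff (by ring)).mp hk⟩
  rw [principalSol, hsup, map_coe, neg_neg]

end principalSol

/-- The one-sided max-plus system `A ⊗ x = b` (with `b` finite) is solvable iff
the sets `T(b, A_{·i})`, `i = 1, …, m`, cover `{1, …, n}`. -/
theorem onesided_solvable_iff_cover {n m : ℕ}
    (A : Fin n → Fin m → WithBot ℝ) (b : Fin n → ℝ) :
    (∃ x : Fin m → WithBot ℝ, mpMul A x = fun k => (b k : WithBot ℝ)) ↔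
    ∀ k : Fin n, ∃ i : Fin m, memT b (fun l => A l i) k := by
  constructor
  · rintro ⟨x, hx⟩ k
    obtain ⟨hle, hattain⟩ := mpMul_eq_coe_iff.mp hx
    obtain ⟨j, hj⟩ := hattain k
    obtain ⟨-, t, -, ht, -⟩ := add_eq_coe.mp hj
    exact ⟨j, memT_iff_exists_shift.mpr ⟨t, ht ▸ hj, fun l => ht ▸ hle l j⟩⟩
  · intro hcover
    refine ⟨principalSol A b, mpMul_eq_coe_iff.mpr ⟨add_principalSol_le, fun k => ?_⟩⟩
    obtain ⟨i, t, hk, hle⟩ := (hcover k).imp fun _ => memT_iff_exists_shift.mp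
    exact ⟨i, by rw [principalSol_eq_of_shift hk hle, hk]⟩
end

section
/- Let a ≤ c be real numbers and b = (a+c)/2. Define the 2×3 real matrices A = [[a, b, c], [2a, 2b, 2c]] and B = [[0, 0, 0], [a, c, b]]. Then for every real λ with a ≤ λ ≤ c, there exists a vector x ∈ (ℝ ∪ {-∞})^3 with at least one finite entry such that A ⊗ x = λ ⊗ B ⊗ x (max-plus operations). In other words, [a, c] ⊆ σ(A, B). -/
/-!
Take `b = (a + c) / 2` and the finite vector `x = (0, λ - b, 2λ - b - c)`, chosen so that in the
first row `A₁ⱼ₊₁ + xⱼ₊₁ = λ + B₁ⱼ + xⱼ`. The first-row terms of `A ⊗ x` and of `λ ⊗ B ⊗ x` then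
agree except for `a` on the left and `3λ - b - c` on the right, which `a ≤ λ` and `λ ≤ c` make
dominated. In the second row both maxima equal `2λ + c - b`.
-/

open Finset

theorem mpMul_coe {n m : ℕ} [NeZero m] (M : Fin n → Fin m → ℝ) (v : Fin m → ℝ) :
    mpMul (fun i j => (M i j : WithBot ℝ)) (fun j => (v j : WithBot ℝ)) =
      fun i => ((univ.sup' univ_nonempty fun j => M i j + v j : ℝ) : WithBot ℝ) := by
  funext i
  rw [coe_sup']
  rfl

theorem Finset.sup'_univ_fin_three {α : Type*} [SemilatticeSup α] (f : Fin 3 → α) :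
    univ.sup' univ_nonempty f = f 0 ⊔ f 1 ⊔ f 2 := by
  simp [Fin.univ_succ, sup'_insert, sup_assoc]

theorem top_row_balance (a b c lam : ℝ) (hal : a ≤ lam) (hlc : lam ≤ c) :
    max (max a lam) (2 * lam - b) = lam + max (max 0 (lam - b)) (2 * lam - b - c) := by
  rw [max_eq_right hal, ← max_add_add_left, ← max_add_add_left, add_zero,
    show lam + (lam - b) = 2 * lam - b by ring]
  exact (max_eq_left (le_max_of_le_right (by linarith))).symm

theorem bottom_row_balance (a b c lam : ℝ) (hb : 2 * b = a + c) (hal : a ≤ lam) (hlc : lam ≤ c) :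
    max (max (2 * a) (2 * b + (lam - b))) (2 * c + (2 * lam - b - c)) =
      lam + max (max a (c + (lam - b))) (b + (2 * lam - b - c)) := by
  rw [max_eq_right (max_le (by linarith) (by linarith)),
    max_eq_left (le_max_of_le_right (by linarith)), max_eq_right (by linarith)]
  ring

theorem interval_subset_spectrum_general (a c : ℝ) :
    ∀ lam : ℝ, a ≤ lam → lam ≤ c →
      ∃ x : Fin 3 → WithBot ℝ, (∃ j, x j ≠ ⊥) ∧
        mpMul (fun i j => ((![![a, (a + c) / 2, c],
            ![2 * a, 2 * ((a + c) / 2), 2 * c]] : Fin 2 → Fin 3 → ℝ) i j : WithBot ℝ)) x =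
        fun i => (lam : WithBot ℝ) +
          mpMul (fun i j => ((![![0, 0, 0],
            ![a, c, (a + c) / 2]] : Fin 2 → Fin 3 → ℝ) i j : WithBot ℝ)) x i := by
  intro lam hal hlc
  refine ⟨fun j => ((![0, lam - (a + c) / 2, 2 * lam - (a + c) / 2 - c] : Fin 3 → ℝ) j : WithBot ℝ),
    ⟨0, WithBot.coe_ne_bot⟩, ?_⟩
  rw [mpMul_coe, mpMul_coe]
  funext i
  rw [← WithBot.coe_add, WithBot.coe_inj, sup'_univ_fin_three, sup'_univ_fin_three]
  fin_cases i
  · simpa using top_row_balance a ((a + c) / 2) c lam hal hlc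
  · simpa using bottom_row_balance a ((a + c) / 2) c lam (by ring) hal hlc

/-- With `b = (a+c)/2`, `A = [[a,b,c],[2a,2b,2c]]`, `B = [[0,0,0],[a,c,b]]`,
every `λ ∈ [a,c]` belongs to the spectrum of `A ⊗ x = λ ⊗ B ⊗ x`. -/
theorem interval_subset_spectrum (a c : ℝ) (hac : a ≤ c) :
    ∀ lam : ℝ, a ≤ lam → lam ≤ c →
      ∃ x : Fin 3 → WithBot ℝ, (∃ j, x j ≠ ⊥) ∧
        mpMul (fun i j => ((![![a, (a + c) / 2, c],
            ![2 * a, 2 * ((a + c) / 2), 2 * c]] : Fin 2 → Fin 3 → ℝ) i j : WithBot ℝ)) x =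
        fun i => (lam : WithBot ℝ) +
          mpMul (fun i j => ((![![0, 0, 0],
            ![a, c, (a + c) / 2]] : Fin 2 → Fin 3 → ℝ) i j : WithBot ℝ)) x i :=
  interval_subset_spectrum_general a c
end

section
/- Let a ≤ λ ≤ b be real numbers with b = (a+c)/2 for some c ≥ a. Then the vector z = (0, λ + b − a, 0, λ + b − a)ᵀ ∈ ℝ^4 belongs to the max-plus column span of the 4×3 matrix C(λ) with columns u = (a, 2a, λ, a+λ)ᵀ, v = (b, 2b, λ, c+λ)ᵀ, w = (c, 2c, λ, b+λ)ᵀ. -/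
open Finset

/-- The `4 × 3` matrix `C(λ)` with columns `u = (a, 2a, λ, a+λ)`,
`v = (b, 2b, λ, c+λ)`, `w = (c, 2c, λ, b+λ)`, where `b = (a+c)/2`. -/
noncomputable def Cmat (a c lam : ℝ) : Fin 4 → Fin 3 → ℝ :=
  ![![a, (a + c) / 2, c],
    ![2 * a, 2 * ((a + c) / 2), 2 * c],
    ![lam, lam, lam],
    ![a + lam, c + lam, (a + c) / 2 + lam]]

theorem WithBot.coe_eq_univ_sup_coe {ι α : Type*} [Fintype ι] [LinearOrder α] {f : ι → α}
    {t : α} (hle : ∀ i, f i ≤ t) (hattain : ∃ i, f i = t) :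
    (t : WithBot α) = univ.sup fun i => (f i : WithBot α) := by
  obtain ⟨j, rfl⟩ := hattain
  exact le_antisymm (le_sup (f := fun i => (f i : WithBot α)) (mem_univ j))
    (Finset.sup_le fun i _ => WithBot.coe_le_coe.2 (hle i))

theorem exists_maxPlus_coeffs_of_certificate {ι κ : Type*} [Fintype ι] (M : κ → ι → ℝ)
    (z : κ → ℝ) (x : ι → ℝ) (hle : ∀ k i, x i + M k i ≤ z k)
    (hattain : ∀ k, ∃ i, x i + M k i = z k) :
    ∃ α : ι → WithBot ℝ, ∀ k, (z k : WithBot ℝ) = univ.sup fun i => α i + (M k i : WithBot ℝ) :=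
  ⟨fun i => x i, fun k => by
    simpa only [← WithBot.coe_add] using WithBot.coe_eq_univ_sup_coe (hle k) (hattain k)⟩

theorem z_mem_span_case3_general (a c lam : ℝ)
    (h1 : a ≤ lam) (h2 : lam ≤ (a + c) / 2) :
    ∃ α : Fin 3 → WithBot ℝ,
      ∀ k : Fin 4,
        ((![0, lam + (a + c) / 2 - a, 0, lam + (a + c) / 2 - a] :
            Fin 4 → ℝ) k : WithBot ℝ) =
          univ.sup fun i => α i + (Cmat a c lam k i : WithBot ℝ) := by
  -- Column `v` attains rows 1 and 4, `w` row 2 and `u` row 3; each coefficient makes its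
  -- column hit the target exactly there.
  refine exists_maxPlus_coeffs_of_certificate _ _
    ![-lam, -((a + c) / 2), lam + (a + c) / 2 - a - 2 * c] ?_ fun k => ?_
  · intro k i
    fin_cases k <;> fin_cases i <;> simp [Cmat] <;> linarith
  · fin_cases k
    exacts [⟨1, by simp [Cmat]⟩, ⟨2, by simp [Cmat]⟩, ⟨0, by simp [Cmat]⟩,
      ⟨1, by simp [Cmat]; ring⟩]

/-- For `a ≤ λ ≤ b = (a+c)/2`, the vector `z = (0, λ+b-a, 0, λ+b-a)` lies in the
max-plus column span of `C(λ)`. -/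
theorem z_mem_span_case3 (a c lam : ℝ) (hac : a ≤ c)
    (h1 : a ≤ lam) (h2 : lam ≤ (a + c) / 2) :
    ∃ α : Fin 3 → WithBot ℝ,
      ∀ k : Fin 4,
        ((![0, lam + (a + c) / 2 - a, 0, lam + (a + c) / 2 - a] :
            Fin 4 → ℝ) k : WithBot ℝ) =
          univ.sup fun i => α i + (Cmat a c lam k i : WithBot ℝ) :=
  z_mem_span_case3_general a c lam h1 h2
end

section
/- Let b ≤ λ ≤ c be real numbers with b = (a+c)/2 for some a ≤ c. Then the vector z = (0, c, 0, c)ᵀ ∈ ℝ^4 belongs to the max-plus column span of the 4×3 matrix C(λ) with columns u = (a, 2a, λ, a+λ)ᵀ, v = (b, 2b, λ, c+λ)ᵀ, w = (c, 2c, λ, b+λ)ᵀ. -/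
open Finset

theorem exists_maxPlus_combination_eq {κ ι : Type*} [Fintype ι] (M : κ → ι → ℝ) (z : κ → ℝ)
    (β : ι → ℝ) (hle : ∀ k i, β i + M k i ≤ z k) (hattain : ∀ k, ∃ i, β i + M k i = z k) :
    ∃ α : ι → WithBot ℝ, ∀ k, (z k : WithBot ℝ) = univ.sup fun i => α i + (M k i : WithBot ℝ) := by
  refine ⟨fun i => (β i : WithBot ℝ), fun k => ?_⟩
  obtain ⟨i, hi⟩ := hattain k
  simp only [← WithBot.coe_add]
  exact le_antisymm (le_sup_of_le (mem_univ i) (WithBot.coe_le_coe.2 hi.ge))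
    (Finset.sup_le fun j _ => WithBot.coe_le_coe.2 (hle k j))

theorem z_mem_span_case4_general (a c lam : ℝ)
    (h1 : (a + c) / 2 ≤ lam) (h2 : lam ≤ c) :
    ∃ α : Fin 3 → WithBot ℝ,
      ∀ k : Fin 4,
        ((![0, c, 0, c] : Fin 4 → ℝ) k : WithBot ℝ) =
          univ.sup fun i => α i + (Cmat a c lam k i : WithBot ℝ) := by
  -- the principal solution `β i = min_k (z k - C k i)`
  apply exists_maxPlus_combination_eq _ _ ![-lam, -lam, -c]
  · intro k i
    fin_cases k <;> fin_cases i <;> simp [Cmat] <;> linarith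
  · intro k
    fin_cases k
    exacts [⟨2, by simp [Cmat]⟩, ⟨2, by simp [Cmat]; ring⟩, ⟨1, by simp [Cmat]⟩,
      ⟨1, by simp [Cmat]⟩]

/-- For `b = (a+c)/2 ≤ λ ≤ c`, the vector `z = (0, c, 0, c)` lies in the
max-plus column span of `C(λ)`. -/
theorem z_mem_span_case4 (a c lam : ℝ) (hac : a ≤ c)
    (h1 : (a + c) / 2 ≤ lam) (h2 : lam ≤ c) :
    ∃ α : Fin 3 → WithBot ℝ,
      ∀ k : Fin 4,
        ((![0, c, 0, c] : Fin 4 → ℝ) k : WithBot ℝ) =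
          univ.sup fun i => α i + (Cmat a c lam k i : WithBot ℝ) :=
  z_mem_span_case4_general a c lam h1 h2
end

section
/- Let a ≤ c, b = (a+c)/2, and let A = [[a, b, c], [2a, 2b, 2c]], B = [[0, 0, 0], [a, c, b]]. For a ≤ λ ≤ b, let C(λ) be the matrix obtained by stacking A over λ ⊗ B, and let z = (0, λ + b − a, 0, λ + b − a)ᵀ. Then the principal solution x_i = min_k (z_k − C(λ)_{ki}) satisfies C(λ) ⊗ x = z, and hence x is an explicit nontrivial solution of A ⊗ x = λ ⊗ B ⊗ x. -/
open Finset

lemma sup3' (f : Fin 3 → ℝ) : univ.sup' univ_nonempty f = f 0 ⊔ f 1 ⊔ f 2 := by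
  apply le_antisymm
  · exact sup'_le _ _ fun i _ => by fin_cases i <;> simp [le_sup_left, le_sup_right, le_sup_of_le_left]
  · simp only [sup_le_iff]; exact ⟨⟨le_sup' f (mem_univ 0), le_sup' f (mem_univ 1)⟩, le_sup' f (mem_univ 2)⟩

lemma inf4' (f : Fin 4 → ℝ) : univ.inf' univ_nonempty f = f 0 ⊓ f 1 ⊓ f 2 ⊓ f 3 := by
  apply le_antisymm
  · simp only [le_inf_iff]
    exact ⟨⟨⟨inf'_le f (mem_univ 0), inf'_le f (mem_univ 1)⟩, inf'_le f (mem_univ 2)⟩, inf'_le f (mem_univ 3)⟩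
  · exact le_inf' _ _ fun i _ => by fin_cases i <;> simp [inf_le_left, inf_le_right, inf_le_of_left_le]


set_option maxHeartbeats 1000000 in
/-- For `a ≤ λ ≤ b`, the principal solution `x_i = min_k (z_k - C(λ)_{ki})` of
`C(λ) ⊗ x = z` with `z = (0, λ+b-a, 0, λ+b-a)` satisfies `C(λ) ⊗ x = z`, and
hence `A ⊗ x = λ ⊗ B ⊗ x`. -/
theorem principal_solution_case3 (a c lam : ℝ) (hac : a ≤ c)
    (h1 : a ≤ lam) (h2 : lam ≤ (a + c) / 2) :
    (∀ k : Fin 4,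
        (univ.sup' univ_nonempty fun i =>
            Cmat a c lam k i + univ.inf' univ_nonempty
              (fun k' => (![0, lam + (a + c) / 2 - a, 0, lam + (a + c) / 2 - a] :
                  Fin 4 → ℝ) k' - Cmat a c lam k' i)) =
          (![0, lam + (a + c) / 2 - a, 0, lam + (a + c) / 2 - a] : Fin 4 → ℝ) k) ∧
    (∀ i : Fin 2,
        (univ.sup' univ_nonempty fun j =>
            (![![a, (a + c) / 2, c], ![2 * a, 2 * ((a + c) / 2), 2 * c]] :
                Fin 2 → Fin 3 → ℝ) i j + univ.inf' univ_nonempty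
              (fun k' => (![0, lam + (a + c) / 2 - a, 0, lam + (a + c) / 2 - a] :
                  Fin 4 → ℝ) k' - Cmat a c lam k' j)) =
          lam + univ.sup' univ_nonempty fun j =>
            (![![0, 0, 0], ![a, c, (a + c) / 2]] : Fin 2 → Fin 3 → ℝ) i j +
              univ.inf' univ_nonempty
                (fun k' => (![0, lam + (a + c) / 2 - a, 0, lam + (a + c) / 2 - a] :
                    Fin 4 → ℝ) k' - Cmat a c lam k' j)) := by
  have X : ∀ i : Fin 3,
      (univ.inf' univ_nonempty
        (fun k' => (![0, lam + (a + c) / 2 - a, 0, lam + (a + c) / 2 - a] :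
            Fin 4 → ℝ) k' - Cmat a c lam k' i)) =
      ![-lam, -((a + c) / 2), lam + (a + c) / 2 - a - 2 * c] i := by
    intro i
    fin_cases i <;> rw [inf4'] <;> simp only [Cmat, Matrix.cons_val] <;> norm_num [Cmat]
    · refine le_antisymm (inf_le_of_left_le (inf_le_of_right_le (by norm_num)))
        (by simp only [le_inf_iff]; exact ⟨⟨⟨by linarith, by linarith⟩, by linarith⟩, by linarith⟩)
    · refine le_antisymm (inf_le_of_left_le (inf_le_of_left_le (inf_le_of_left_le (by norm_num))))
        (by simp only [le_inf_iff]; exact ⟨⟨⟨by linarith, by linarith⟩, by linarith⟩, by linarith⟩)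
    · refine le_antisymm (inf_le_of_left_le (inf_le_of_left_le (inf_le_of_right_le (by norm_num))))
        (by simp only [le_inf_iff]; exact ⟨⟨⟨by linarith, by linarith⟩, by linarith⟩, by linarith⟩)
  constructor
  · intro k
    fin_cases k <;> rw [sup3'] <;> simp only [X] <;> simp only [Cmat, Fin.reduceFinMk, Matrix.cons_val] <;> norm_num [Cmat] <;>
      first
        | linarith
        | (simp only [max_def]; split_ifs <;> linarith)
        | exact ⟨by linarith, by linarith⟩
  · intro i
    fin_cases i <;> rw [sup3', sup3'] <;> simp only [X] <;> simp only [Cmat, Fin.reduceFinMk, Matrix.cons_val] <;> norm_num [Cmat] <;>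
      first
        | linarith
        | (simp only [max_def]; split_ifs <;> linarith)
        | exact ⟨by linarith, by linarith⟩
end

section
/- Let A, B ∈ (ℝ ∪ {-∞})^{n×m} and suppose that for every pair (i,j), at least one of A_{ij}, B_{ij} is finite. If λ ∈ σ(A,B) then for every row i there exists j with λ + B_{ij} ≥ A_{ij} (both sides interpreted in ℝ ∪ {-∞}), and for every row i there exists j with A_{ij} ≥ λ + B_{ij}. -/
/-!
Writing `C i j = λ + B i j`, the eigen-equation becomes `A ⊗ x = C ⊗ x`. At an index `j₀` with
`x j₀` finite, one of `A i j₀`, `C i j₀` is finite, so every entry of `A ⊗ x` is finite. In row `i`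
an index `j` attaining the maximum of `C ⊗ x` has `x j` finite, and
`A i j + x j ≤ (A ⊗ x) i = C i j + x j`; cancelling `x j` gives `A i j ≤ C i j`. Exchanging the
roles of `A` and `C` gives the reverse bound.
-/

open Finset

section
variable {n m : ℕ} (A : Fin n → Fin m → WithBot ℝ) (x : Fin m → WithBot ℝ)

theorem le_mpMul (i : Fin n) (j : Fin m) : A i j + x j ≤ mpMul A x i :=
  le_sup (f := fun j => A i j + x j) (mem_univ j)

theorem mpMul_const_add (c : WithBot ℝ) (i : Fin n) :
    mpMul (fun i j => c + A i j) x i = c + mpMul A x i := by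
  simp only [mpMul, add_assoc]
  exact (apply_sup_eq_sup_comp (c + ·) (fun _ _ => (max_add_add_left _ _ _).symm)
    (WithBot.add_bot c)).symm

variable {A x}

theorem mpMul_ne_bot {i : Fin n} {j : Fin m} (hA : A i j ≠ ⊥) (hx : x j ≠ ⊥) :
    mpMul A x i ≠ ⊥ :=
  ne_bot_of_le_ne_bot (WithBot.add_ne_bot.2 ⟨hA, hx⟩) (le_mpMul A x i j)

theorem exists_add_eq_mpMul {i : Fin n} (h : mpMul A x i ≠ ⊥) :
    ∃ j, x j ≠ ⊥ ∧ A i j + x j = mpMul A x i := by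
  have hne : (univ : Finset (Fin m)).Nonempty := by
    by_contra hempty
    exact h (by simp [mpMul, not_nonempty_iff_eq_empty.1 hempty])
  obtain ⟨j, -, hj⟩ := exists_mem_eq_sup univ hne fun j => A i j + x j
  refine ⟨j, fun hxj => h ?_, hj.symm⟩
  rw [mpMul, hj, hxj, WithBot.add_bot]

theorem exists_le_of_mpMul_le {C : Fin n → Fin m → WithBot ℝ} {i : Fin n}
    (hle : mpMul A x i ≤ mpMul C x i) (hC : mpMul C x i ≠ ⊥) : ∃ j, A i j ≤ C i j := by
  obtain ⟨j, hxj, hj⟩ := exists_add_eq_mpMul hC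
  exact ⟨j, (WithBot.add_le_add_iff_right hxj).1 (((le_mpMul A x i j).trans hle).trans hj.ge)⟩

end

/-- If in each position at least one of `A_{ij}`, `B_{ij}` is finite and
`λ ∈ σ(A,B)`, then in each row there is a `j` with `λ + B_{ij} ≥ A_{ij}`, and
in each row there is a `j` with `A_{ij} ≥ λ + B_{ij}`. -/
theorem spectrum_row_bounds {n m : ℕ} (A B : Fin n → Fin m → WithBot ℝ)
    (hfin : ∀ i j, A i j ≠ ⊥ ∨ B i j ≠ ⊥) (lam : ℝ)
    (hlam : ∃ x : Fin m → WithBot ℝ, (∃ j, x j ≠ ⊥) ∧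
      mpMul A x = fun i => (lam : WithBot ℝ) + mpMul B x i) :
    (∀ i, ∃ j, A i j ≤ (lam : WithBot ℝ) + B i j) ∧
    (∀ i, ∃ j, (lam : WithBot ℝ) + B i j ≤ A i j) := by
  obtain ⟨x, ⟨j₀, hx⟩, heq⟩ := hlam
  set C : Fin n → Fin m → WithBot ℝ := fun i j => lam + B i j
  have hAC : ∀ i, mpMul A x i = mpMul C x i := fun i =>
    (congrFun heq i).trans (mpMul_const_add B x lam i).symm
  have hA : ∀ i, mpMul A x i ≠ ⊥ := fun i => (hfin i j₀).elim (mpMul_ne_bot · hx)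
    fun hB => hAC i ▸ mpMul_ne_bot (WithBot.add_ne_bot.2 ⟨WithBot.coe_ne_bot, hB⟩) hx
  exact ⟨fun i => exists_le_of_mpMul_le (hAC i).le (hAC i ▸ hA i),
    fun i => exists_le_of_mpMul_le (hAC i).ge (hA i)⟩
end
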